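/- No set of n-2 entries above the diagonal determines a consistent n×n pairwise comparison matrix: for every set B of index pairs (i,j) with i < j and |B| = n-2, there exist two distinct consistent n×n PC matrices agreeing on all entries indexed by B (for n ≥ 2). -/

import Mathlib

/-!
Join `i` and `j` by an edge whenever `(i, j) ∈ B`. With only `n - 2` edges this graph on `n`
vertices is disconnected, so some vertex `v` is not reachable from `u`. Weighting the component
of `u` by `1` and every other vertex by `2`, the matrix `w i / w j` is consistent, has entry `1`
at every pair of `B`, and still differs from the all-ones matrix at `(u, v)`.
-/

open SimpleGraph

lemma SimpleGraph.exists_not_reachable_of_card_edgeSet_add_one_lt {V : Type*}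
    {G : SimpleGraph V} (h : Nat.card G.edgeSet + 1 < Nat.card V) :
    ∃ u v, ¬ G.Reachable u v := by
  by_contra! hreach
  have : Nonempty V := (Nat.card_pos_iff.1 (by omega)).1
  have := (Connected.mk hreach).card_vert_le_card_edgeSet_add_one
  omega

namespace PairwiseComparison

section RatioMatrix

variable {ι : Type*} (w : ι → ℝ)

noncomputable def ratioMatrix : Matrix ι ι ℝ := Matrix.of fun i j => w i / w j

variable {w}

lemma ratioMatrix_pos (hw : ∀ i, 0 < w i) (i j : ι) : 0 < ratioMatrix w i j :=
  div_pos (hw i) (hw j)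

lemma ratioMatrix_mul_ratioMatrix (hw : ∀ i, w i ≠ 0) (i j k : ι) :
    ratioMatrix w i j * ratioMatrix w j k = ratioMatrix w i k := by
  simp only [ratioMatrix, Matrix.of_apply]
  field_simp [hw j]

lemma ratioMatrix_apply_of_eq {i j : ι} (hij : w i = w j) (hw : w j ≠ 0) :
    ratioMatrix w i j = 1 := by
  simp [ratioMatrix, hij, hw]

lemma ratioMatrix_one_apply (i j : ι) : ratioMatrix (1 : ι → ℝ) i j = 1 := by
  simp [ratioMatrix]

end RatioMatrix

section GeneratorGraph

variable {V : Type*}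

def generatorGraph (B : Finset (V × V)) : SimpleGraph V :=
  fromEdgeSet (Sym2.mk.uncurry '' (B : Set (V × V)))

lemma generatorGraph_reachable_of_mem {B : Finset (V × V)} {p : V × V} (hp : p ∈ B) :
    (generatorGraph B).Reachable p.1 p.2 := by
  by_cases h : p.1 = p.2
  · rw [h]
  · exact Adj.reachable ((fromEdgeSet_adj _).2 ⟨⟨p, hp, rfl⟩, h⟩)

lemma card_edgeSet_generatorGraph_le (B : Finset (V × V)) :
    Nat.card (generatorGraph B).edgeSet ≤ B.card := by
  have hfin : (Sym2.mk.uncurry '' (B : Set (V × V))).Finite := B.finite_toSet.image _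
  calc Nat.card (generatorGraph B).edgeSet
      = (Sym2.mk.uncurry '' (B : Set (V × V)) \ Sym2.diagSet).ncard := by
        rw [generatorGraph, edgeSet_fromEdgeSet, Nat.card_coe_set_eq]
    _ ≤ (Sym2.mk.uncurry '' (B : Set (V × V))).ncard := Set.ncard_le_ncard Set.sdiff_subset hfin
    _ ≤ (B : Set (V × V)).ncard := Set.ncard_image_le B.finite_toSet
    _ = B.card := Set.ncard_coe_finset B

end GeneratorGraph

end PairwiseComparison

open PairwiseComparison

theorem not_generated_by_card_sub_two_general (n : ℕ) (hn : 2 ≤ n)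
    (B : Finset (Fin n × Fin n))
    (hcard : B.card = n - 2) :
    ∃ M M' : Matrix (Fin n) (Fin n) ℝ,
      (∀ i j, 0 < M i j) ∧ (∀ i j k, M i j * M j k = M i k) ∧
      (∀ i j, 0 < M' i j) ∧ (∀ i j k, M' i j * M' j k = M' i k) ∧
      (∀ p ∈ B, M p.1 p.2 = M' p.1 p.2) ∧ M ≠ M' := by
  classical
  have hsparse : Nat.card (generatorGraph B).edgeSet + 1 < Nat.card (Fin n) := by
    have := card_edgeSet_generatorGraph_le B
    rw [Nat.card_fin]
    omega
  set G := generatorGraph B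
  obtain ⟨u, v, huv⟩ := exists_not_reachable_of_card_edgeSet_add_one_lt hsparse
  let w : Fin n → ℝ := fun k =>
    if G.connectedComponentMk k = G.connectedComponentMk u then 1 else 2
  have hw : ∀ k, 0 < w k := fun k => by dsimp only [w]; split_ifs <;> norm_num
  refine ⟨ratioMatrix w, ratioMatrix 1, ratioMatrix_pos hw,
    ratioMatrix_mul_ratioMatrix fun k => (hw k).ne', ratioMatrix_pos fun _ => one_pos,
    ratioMatrix_mul_ratioMatrix fun _ => one_ne_zero, fun p hp => ?_, fun heq => ?_⟩
  · have hcomp : G.connectedComponentMk p.1 = G.connectedComponentMk p.2 :=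
      ConnectedComponent.sound (generatorGraph_reachable_of_mem hp)
    rw [ratioMatrix_one_apply, ratioMatrix_apply_of_eq (by simp only [w, hcomp]) (hw _).ne']
  · have hvu : G.connectedComponentMk v ≠ G.connectedComponentMk u :=
      fun h => huv (ConnectedComponent.exact h).symm
    have huv' := congrFun (congrFun heq u) v
    simp only [ratioMatrix, Matrix.of_apply, w, hvu, if_false, if_pos, Pi.one_apply] at huv'
    norm_num at huv'

/-- No set of `n - 2` above-diagonal entries determines a consistent `n × n`
PC matrix. -/
theorem not_generated_by_card_sub_two (n : ℕ) (hn : 2 ≤ n)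
    (B : Finset (Fin n × Fin n)) (hB : ∀ p ∈ B, p.1 < p.2)
    (hcard : B.card = n - 2) :
    ∃ M M' : Matrix (Fin n) (Fin n) ℝ,
      (∀ i j, 0 < M i j) ∧ (∀ i j k, M i j * M j k = M i k) ∧
      (∀ i j, 0 < M' i j) ∧ (∀ i j k, M' i j * M' j k = M' i k) ∧
      (∀ p ∈ B, M p.1 p.2 = M' p.1 p.2) ∧ M ≠ M' :=
  not_generated_by_card_sub_two_general n hn B hcard
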